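/- arXiv:1112.2869 — 6 statements merged into one kernel-verified Lean document; each statement's English description precedes it below -/
import Mathlib

section
/- Let ℍ be a family of d ≥ N hyperplanes in general position in ℝ^N. Then the Chung-Yao lattice Θ_ℍ = {θ_H : H ∈ binom(ℍ, N)} is an interpolation lattice of degree d − N: for every function f : Θ_ℍ → ℝ there exists a unique polynomial L of degree ≤ d − N with L = f on Θ_ℍ, and L(x) = Σ_{H ∈ binom(ℍ,N)} f(θ_H) ∏_{ℓ ∉ H} (⟨n_ℓ, x⟩ − c_ℓ)/(⟨n_ℓ, θ_H⟩ − c_ℓ). -/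
/-!
The fundamental polynomial of a node `θ H` is the product over `ℓ ∉ H` of the normalised
equations `(⟪n ℓ, x⟫ - c ℓ) / (⟪n ℓ, θ H⟫ - c ℓ)`. It has degree `d - N`, equals `1` at `θ H`
(general position keeps `θ H` off every hyperplane outside `H`), and vanishes at every other node
`θ H'`, because `H'` contains a hyperplane `ℓ ∉ H` through `θ H'`. Hence evaluation at the
`(d choose N)` nodes maps the polynomials of degree `≤ d - N` onto all functions on the nodes; that
space has dimension `(N + (d - N)) choose (d - N) = d choose N`, so the map is bijective, and its
inverse sends `f` to `∑ H, f (θ H) • (fundamental polynomial of θ H)`.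
-/

open MvPolynomial Finset
open scoped InnerProductSpace

/-- Appending the slack coordinate `m - ∑ i, f i`. -/
def Fin.sumLeEquivSumEq (N m : ℕ) :
    {f : Fin N → ℕ // ∑ i, f i ≤ m} ≃ {g : Fin (N + 1) → ℕ // ∑ i, g i = m} where
  toFun f := ⟨Fin.snoc f.1 (m - ∑ i, f.1 i), by
    rw [Fin.sum_univ_castSucc]
    simp only [Fin.snoc_castSucc, Fin.snoc_last]
    have := f.2; omega⟩
  invFun g := ⟨fun i => g.1 i.castSucc, by
    have := g.2
    rw [Fin.sum_univ_castSucc] at this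
    exact (Nat.le_add_right _ _).trans_eq this⟩
  left_inv f := by
    ext i
    simp
  right_inv g := by
    ext i
    refine Fin.lastCases ?_ (fun j => by simp) i
    have := g.2
    rw [Fin.sum_univ_castSucc] at this
    simp only [Fin.snoc_last]
    omega

theorem MvPolynomial.finrank_restrictTotalDegree_fin {R : Type*} [CommRing R]
    [StrongRankCondition R] (N m : ℕ) :
    Module.finrank R (restrictTotalDegree (Fin N) R m) = (N + m).choose m := by
  rw [restrictTotalDegree, Module.finrank_eq_nat_card_basis (basisRestrictSupport R _),
    Nat.card_congr ((Finsupp.equivFunOnFinite.subtypeEquiv fun s => ?_).trans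
      ((Fin.sumLeEquivSumEq N m).trans (Sym.equivNatSumOfFintype _ m).symm)),
    Sym.natCard_sym_eq_choose]
  · simp
  · show (s.sum fun _ e => e) ≤ m ↔ _
    rw [Finsupp.sum_fintype _ _ (by simp)]
    rfl

namespace MvPolynomial

variable {K σ ι : Type*} [Field K] [Fintype ι] {m : ℕ} {x : ι → σ → K}
  {P : ι → MvPolynomial σ K}

theorem eval_sum_smul_of_lagrange (hself : ∀ i, eval (x i) (P i) = 1)
    (hne : ∀ i j, i ≠ j → eval (x j) (P i) = 0) (v : ι → K) (j : ι) :
    eval (x j) (∑ i, v i • P i) = v j := by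
  rw [map_sum, Finset.sum_eq_single j (fun i _ hij => by simp [hne i j hij]) (by simp)]
  simp [hself]

theorem sum_smul_mem_restrictTotalDegree (hP : ∀ i, (P i).totalDegree ≤ m) (v : ι → K) :
    ∑ i, v i • P i ∈ restrictTotalDegree σ K m :=
  Submodule.sum_mem _ fun i _ =>
    Submodule.smul_mem _ _ ((mem_restrictTotalDegree _ _ _).mpr (hP i))

variable [Finite σ]

/-- Lagrange polynomials at as many nodes as the dimension of the space of polynomials of degree
`≤ m` make evaluation at the nodes surjective, hence injective, on that space. -/
theorem eq_zero_of_eval_eq_zero_of_lagrange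
    (hcard : Fintype.card ι = Module.finrank K (restrictTotalDegree σ K m))
    (hP : ∀ i, (P i).totalDegree ≤ m) (hself : ∀ i, eval (x i) (P i) = 1)
    (hne : ∀ i j, i ≠ j → eval (x j) (P i) = 0) {Q : MvPolynomial σ K}
    (hQ : Q.totalDegree ≤ m) (hQx : ∀ j, eval (x j) Q = 0) : Q = 0 := by
  let E : restrictTotalDegree σ K m →ₗ[K] (ι → K) :=
    LinearMap.pi fun j => (aeval (x j)).toLinearMap ∘ₗ (restrictTotalDegree σ K m).subtype
  have hsurj : Function.Surjective E := fun v =>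
    ⟨⟨_, sum_smul_mem_restrictTotalDegree hP v⟩,
      by ext j; simpa [E] using eval_sum_smul_of_lagrange hself hne v j⟩
  have hinj : Function.Injective E :=
    (LinearMap.injective_iff_surjective_of_finrank_eq_finrank
      (by rw [Module.finrank_fintype_fun_eq_card, hcard])).mpr hsurj
  have hEQ : E ⟨Q, (mem_restrictTotalDegree _ _ _).mpr hQ⟩ = E 0 := by
    ext j
    simpa [E] using hQx j
  simpa using congrArg Subtype.val (hinj hEQ)

theorem eq_sum_smul_of_lagrange
    (hcard : Fintype.card ι = Module.finrank K (restrictTotalDegree σ K m))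
    (hP : ∀ i, (P i).totalDegree ≤ m) (hself : ∀ i, eval (x i) (P i) = 1)
    (hne : ∀ i j, i ≠ j → eval (x j) (P i) = 0) {v : ι → K} {L : MvPolynomial σ K}
    (hL : L.totalDegree ≤ m) (hLx : ∀ j, eval (x j) L = v j) : L = ∑ i, v i • P i := by
  refine sub_eq_zero.mp (eq_zero_of_eval_eq_zero_of_lagrange hcard hP hself hne
    ((totalDegree_sub _ _).trans (max_le hL ?_)) fun j => ?_)
  · exact (mem_restrictTotalDegree _ _ _).mp (sum_smul_mem_restrictTotalDegree hP v)
  · rw [map_sub, hLx, eval_sum_smul_of_lagrange hself hne, sub_self]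

theorem existsUnique_eval_eq_of_lagrange
    (hcard : Fintype.card ι = Module.finrank K (restrictTotalDegree σ K m))
    (hP : ∀ i, (P i).totalDegree ≤ m) (hself : ∀ i, eval (x i) (P i) = 1)
    (hne : ∀ i j, i ≠ j → eval (x j) (P i) = 0) (v : ι → K) :
    ∃! L : MvPolynomial σ K, L.totalDegree ≤ m ∧ ∀ j, eval (x j) L = v j :=
  ⟨∑ i, v i • P i,
    ⟨(mem_restrictTotalDegree _ _ _).mp (sum_smul_mem_restrictTotalDegree hP v),
      eval_sum_smul_of_lagrange hself hne v⟩,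
    fun _ hL => eq_sum_smul_of_lagrange hcard hP hself hne hL.1 hL.2⟩

end MvPolynomial

theorem EuclideanSpace.eq_of_inner_eq_of_det_ne_zero {σ : Type*} [Fintype σ] [DecidableEq σ]
    {a : σ → EuclideanSpace ℝ σ} (ha : (Matrix.of fun i j => a i j).det ≠ 0)
    {x y : EuclideanSpace ℝ σ} (h : ∀ i, ⟪a i, x⟫_ℝ = ⟪a i, y⟫_ℝ) : x = y := by
  have hmul : (Matrix.of fun i j => a i j).mulVec (x - y).ofLp = 0 := by
    ext i
    have := sub_eq_zero.mpr (h i)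
    rw [← inner_sub_right, EuclideanSpace.inner_eq_star_dotProduct] at this
    simpa [Matrix.mulVec, dotProduct_comm] using this
  exact WithLp.ofLp_injective 2
    (by simpa [sub_eq_zero] using Matrix.eq_zero_of_mulVec_eq_zero ha hmul)

noncomputable def hyperplanePoly {σ : Type*} [Fintype σ] (a : EuclideanSpace ℝ σ) (b : ℝ) :
    MvPolynomial σ ℝ :=
  ∑ j, C (a j) * X j - C b

theorem eval_hyperplanePoly {σ : Type*} [Fintype σ] (a : EuclideanSpace ℝ σ) (b : ℝ)
    (x : EuclideanSpace ℝ σ) : eval (fun j => x j) (hyperplanePoly a b) = ⟪a, x⟫_ℝ - b := by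
  simp [hyperplanePoly, EuclideanSpace.inner_eq_star_dotProduct, dotProduct, mul_comm]

theorem totalDegree_hyperplanePoly_le {σ : Type*} [Fintype σ] (a : EuclideanSpace ℝ σ) (b : ℝ) :
    (hyperplanePoly a b).totalDegree ≤ 1 := by
  refine (totalDegree_sub _ _).trans (max_le (totalDegree_finsetSum_le fun j _ => ?_) (by simp))
  exact (totalDegree_mul _ _).trans (by simp [totalDegree_X])

section ChungYao

variable {N : ℕ} {ι : Type*} (n : ι → EuclideanSpace ℝ (Fin N)) (c : ι → ℝ)
  (θ : Finset ι → EuclideanSpace ℝ (Fin N))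

theorem eq_of_forall_mem_inner_eq [LinearOrder ι]
    (hgp : ∀ g : Fin N → ι, StrictMono g → (Matrix.of fun i j => n (g i) j).det ≠ 0)
    {H : Finset ι} (hH : H.card = N) {x y : EuclideanSpace ℝ (Fin N)}
    (h : ∀ i ∈ H, ⟪n i, x⟫_ℝ = ⟪n i, y⟫_ℝ) : x = y :=
  EuclideanSpace.eq_of_inner_eq_of_det_ne_zero (hgp _ (H.orderEmbOfFin hH).strictMono)
    fun i => h _ (H.orderEmbOfFin_mem hH i)

/-- If `θ H` lay on hyperplane `i`, swapping `i` for a hyperplane of `H` would give another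
`N`-subset with the same intersection point. -/
theorem inner_ne_of_notMem [LinearOrder ι] (hN : 1 ≤ N)
    (hgp : ∀ g : Fin N → ι, StrictMono g → (Matrix.of fun i j => n (g i) j).det ≠ 0)
    (hθ : ∀ H : Finset ι, H.card = N → ∀ i ∈ H, ⟪n i, θ H⟫_ℝ = c i)
    (hinj : ∀ H H' : Finset ι, H.card = N → H'.card = N → θ H = θ H' → H = H')
    {H : Finset ι} (hH : H.card = N) {i : ι} (hi : i ∉ H) : ⟪n i, θ H⟫_ℝ ≠ c i := by
  intro hiθ
  obtain ⟨j, hj⟩ := card_pos.mp (hH ▸ hN)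
  have hi' : i ∉ H.erase j := fun h => hi (mem_of_mem_erase h)
  have hH' : (insert i (H.erase j)).card = N := by
    rw [card_insert_of_notMem hi', card_erase_of_mem hj]
    omega
  have hθH' : θ (insert i (H.erase j)) = θ H :=
    eq_of_forall_mem_inner_eq n hgp hH' fun k hk => by
      rw [hθ _ hH' k hk]
      rcases mem_insert.mp hk with rfl | hk
      · exact hiθ.symm
      · exact (hθ H hH k (mem_of_mem_erase hk)).symm
  exact hi (hinj _ _ hH' hH hθH' ▸ mem_insert_self i _)

variable [Fintype ι] [DecidableEq ι]

/-- The fundamental Lagrange polynomial of the node `θ H`. -/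
noncomputable def chungYaoPoly (H : Finset ι) : MvPolynomial (Fin N) ℝ :=
  ∏ i ∈ Hᶜ, (⟪n i, θ H⟫_ℝ - c i)⁻¹ • hyperplanePoly (n i) (c i)

theorem eval_chungYaoPoly (H : Finset ι) (x : EuclideanSpace ℝ (Fin N)) :
    eval (fun j => x j) (chungYaoPoly n c θ H) =
      ∏ i ∈ Hᶜ, (⟪n i, x⟫_ℝ - c i) / (⟪n i, θ H⟫_ℝ - c i) := by
  simp only [chungYaoPoly, map_prod, smul_eval, eval_hyperplanePoly]
  exact prod_congr rfl fun i _ => inv_mul_eq_div _ _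

theorem totalDegree_chungYaoPoly_le (H : Finset ι) :
    (chungYaoPoly n c θ H).totalDegree ≤ Fintype.card ι - H.card := by
  refine (totalDegree_finsetProd _ _).trans ?_
  rw [← card_compl, ← mul_one #Hᶜ, ← smul_eq_mul]
  exact sum_le_card_nsmul _ _ _ fun i _ =>
    (totalDegree_smul_le _ _).trans (totalDegree_hyperplanePoly_le _ _)

theorem eval_chungYaoPoly_eq_zero {H : Finset ι} {x : EuclideanSpace ℝ (Fin N)} {i : ι}
    (hi : i ∉ H) (hx : ⟪n i, x⟫_ℝ = c i) : eval (fun j => x j) (chungYaoPoly n c θ H) = 0 := by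
  rw [eval_chungYaoPoly]
  exact prod_eq_zero (mem_compl.mpr hi) (by rw [hx, sub_self, zero_div])

end ChungYao

/-- Chung–Yao theorem: if `ℍ = {ℓ_1, …, ℓ_d}`, `d ≥ N`, is a family of hyperplanes in
general position in `ℝ^N` (each `N`-subset `H` has a unique common point `θ H`, and
`H ↦ θ H` is injective), then the Chung–Yao lattice `{θ H}` is an interpolation lattice of
degree `d - N`: every `f` has a unique interpolant `L` of total degree `≤ d - N`, and this
interpolant is given by the Chung–Yao formula. -/
theorem stmt_2 (N d : ℕ) (hN : 1 ≤ N) (hd : N ≤ d)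
    (n : Fin d → EuclideanSpace ℝ (Fin N)) (c : Fin d → ℝ)
    (hgp : ∀ g : Fin N → Fin d, StrictMono g →
      Matrix.det (Matrix.of fun i j => n (g i) j) ≠ 0)
    (θ : Finset (Fin d) → EuclideanSpace ℝ (Fin N))
    (hθ : ∀ H : Finset (Fin d), H.card = N → ∀ i ∈ H, (inner ℝ (n i) (θ H) : ℝ) = c i)
    (hinj : ∀ H H' : Finset (Fin d), H.card = N → H'.card = N → θ H = θ H' → H = H')
    (f : EuclideanSpace ℝ (Fin N) → ℝ) :
    (∃! L : MvPolynomial (Fin N) ℝ, L.totalDegree ≤ d - N ∧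
      ∀ H : Finset (Fin d), H.card = N →
        MvPolynomial.eval (fun j => θ H j) L = f (θ H)) ∧
    ∀ L : MvPolynomial (Fin N) ℝ, L.totalDegree ≤ d - N →
      (∀ H : Finset (Fin d), H.card = N →
        MvPolynomial.eval (fun j => θ H j) L = f (θ H)) →
      ∀ x : EuclideanSpace ℝ (Fin N),
        MvPolynomial.eval (fun j => x j) L =
          ∑ H ∈ Finset.powersetCard N (Finset.univ : Finset (Fin d)),
            f (θ H) * ∏ i ∈ Hᶜ,
              ((inner ℝ (n i) x : ℝ) - c i) / ((inner ℝ (n i) (θ H) : ℝ) - c i) := by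
  set S := powersetCard N (univ : Finset (Fin d))
  have hS (H : S) : (H : Finset (Fin d)).card = N := mem_powersetCard_univ.mp H.2
  have hnodes (L : MvPolynomial (Fin N) ℝ) :
      (∀ H : Finset (Fin d), H.card = N → eval (fun j => θ H j) L = f (θ H)) ↔
        ∀ H : S, eval (fun j => θ H j) L = f (θ H) :=
    ⟨fun h H => h H (hS H), fun h H hH => h ⟨H, mem_powersetCard_univ.mpr hH⟩⟩
  have hcard : Fintype.card S = Module.finrank ℝ (restrictTotalDegree (Fin N) ℝ (d - N)) := by
    rw [finrank_restrictTotalDegree_fin, Fintype.card_coe, card_powersetCard, card_univ,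
      Fintype.card_fin, Nat.add_sub_cancel' hd, Nat.choose_symm hd]
  have hdeg (H : S) : (chungYaoPoly n c θ H).totalDegree ≤ d - N := by
    simpa [hS H] using totalDegree_chungYaoPoly_le n c θ H
  have hself (H : S) : eval (fun j => θ H j) (chungYaoPoly n c θ H) = 1 := by
    rw [eval_chungYaoPoly]
    exact prod_eq_one fun i hi => div_self (sub_ne_zero.mpr
      (inner_ne_of_notMem n c θ hN hgp hθ hinj (hS H) (mem_compl.mp hi)))
  have hne (H H' : S) (hHH' : H ≠ H') : eval (fun j => θ H' j) (chungYaoPoly n c θ H) = 0 := by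
    obtain ⟨i, hiH', hiH⟩ := not_subset.mp fun hsub =>
      hHH' (Subtype.ext (eq_of_subset_of_card_le hsub (by rw [hS H, hS H'])).symm)
    exact eval_chungYaoPoly_eq_zero n c θ hiH (hθ H' (hS H') i hiH')
  refine ⟨?_, fun L hL hLx x => ?_⟩
  · simp_rw [hnodes]
    exact existsUnique_eval_eq_of_lagrange hcard hdeg hself hne _
  · rw [eq_sum_smul_of_lagrange hcard hdeg hself hne hL ((hnodes L).mp hLx), map_sum,
      ← sum_coe_sort S]
    simp [eval_chungYaoPoly]
end

section
/- Given d+1 points a_0,…,a_d in ℝ converging to a point a, and f a C^d function on a neighborhood of a, the Lagrange interpolation polynomials L[a_0,…,a_d; f] converge (coefficientwise) to the Taylor polynomial of f at a of order d. -/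
/-!
The coefficient of `X ^ n` in the interpolant `L` of `f` at `n + 1` nodes is a divided difference:
applying Rolle's theorem `n` times to `f - L` gives a point `ξ` in any interval containing the
nodes with `L.coeff n = f⁽ⁿ⁾(ξ) / n!`, so as the nodes tend to `b` it tends to `f⁽ⁿ⁾(b) / n!`.
Subtracting that coefficient times the nodal polynomial of the first `n` nodes leaves the
interpolant at those nodes (Newton's formula), the nodal polynomials tend coefficientwise to
`(X - b) ^ n`, and induction on `n` finishes the proof.
-/

open Polynomial Filter Set Topology
open scoped Nat

namespace Polynomial

section Calculus

variable {𝕜 : Type*} [NontriviallyNormedField 𝕜]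

theorem iteratedDeriv_eval (p : 𝕜[X]) (n : ℕ) :
    iteratedDeriv n (fun x => p.eval x) = fun x => (derivative^[n] p).eval x := by
  induction n generalizing p with
  | zero => rfl
  | succ n ih =>
    rw [iteratedDeriv_succ', Function.iterate_succ_apply, ← ih]
    congr 1
    funext x
    exact p.deriv

theorem iteratedDeriv_eval_of_natDegree_le {p : 𝕜[X]} {n : ℕ} (hp : p.natDegree ≤ n) (x : 𝕜) :
    iteratedDeriv n (fun x => p.eval x) x = n ! * p.coeff n := by
  have hconst : (derivative^[n] p).natDegree = 0 :=
    Nat.eq_zero_of_le_zero ((p.natDegree_iterate_derivative n).trans (by omega))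
  rw [iteratedDeriv_eval]
  beta_reduce
  rw [eq_C_of_natDegree_eq_zero hconst, eval_C, coeff_iterate_derivative, zero_add,
    Nat.descFactorial_self, nsmul_eq_mul]

end Calculus

theorem natDegree_sub_C_coeff_mul_le {R : Type*} [Ring R] {p q : R[X]} {n : ℕ}
    (hp : p.natDegree ≤ n + 1) (hq : q.Monic) (hqn : q.natDegree = n + 1) :
    (p - C (p.coeff (n + 1)) * q).natDegree ≤ n := by
  refine natDegree_le_iff_coeff_eq_zero.2 fun m hm => ?_
  rw [coeff_sub, coeff_C_mul]
  obtain rfl | hlt := (Nat.succ_le_of_lt hm).eq_or_lt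
  · rw [Nat.succ_eq_add_one, ← hqn, hq.coeff_natDegree, mul_one, sub_self]
  · rw [coeff_eq_zero_of_natDegree_lt (hp.trans_lt hlt),
      coeff_eq_zero_of_natDegree_lt (hqn.trans_lt hlt), mul_zero, sub_zero]

section Limits

variable {R : Type*} [CommRing R] [TopologicalSpace R] [IsTopologicalRing R]
  {ι : Type*} {l : Filter ι}

theorem tendsto_coeff_mul {p q : ι → R[X]} {P Q : R[X]}
    (hp : ∀ k, Tendsto (fun s => (p s).coeff k) l (𝓝 (P.coeff k)))
    (hq : ∀ k, Tendsto (fun s => (q s).coeff k) l (𝓝 (Q.coeff k))) (k : ℕ) :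
    Tendsto (fun s => (p s * q s).coeff k) l (𝓝 ((P * Q).coeff k)) := by
  simp only [coeff_mul]
  exact tendsto_finsetSum _ fun i _ => (hp i.1).mul (hq i.2)

theorem tendsto_coeff_prod_X_sub_C {κ : Type*} {c : ι → κ → R} {b : R} (t : Finset κ)
    (hc : ∀ i ∈ t, Tendsto (fun s => c s i) l (𝓝 b)) (k : ℕ) :
    Tendsto (fun s => (∏ i ∈ t, (X - C (c s i))).coeff k) l
      (𝓝 (((X - C b) ^ t.card).coeff k)) := by
  classical
  induction t using Finset.induction_on generalizing k with
  | empty => simpa using tendsto_const_nhds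
  | insert j t hj ih =>
    simp only [Finset.prod_insert hj, Finset.card_insert_of_notMem hj, pow_succ']
    refine tendsto_coeff_mul (fun k => ?_) (ih fun i hi => hc i (Finset.mem_insert_of_mem hi)) k
    have hcj := hc j (Finset.mem_insert_self j t)
    simp only [coeff_sub, coeff_C]
    split_ifs
    · exact tendsto_const_nhds.sub hcj
    · simpa using tendsto_const_nhds

end Limits

end Polynomial

theorem exists_finset_deriv_eq_zero {g : ℝ → ℝ} {V : Set ℝ} (hV : V.OrdConnected)
    (hg : ContinuousOn g V) {s : Finset ℝ} (hsV : ↑s ⊆ V) (hgs : ∀ x ∈ s, g x = 0) :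
    ∃ t : Finset ℝ, s.card ≤ t.card + 1 ∧ ↑t ⊆ V ∧ ∀ z ∈ t, deriv g z = 0 := by
  have hRolle : ∀ p ∈ s ×ˢ s, p.1 < p.2 → ∃ z ∈ Ioo p.1 p.2, deriv g z = 0 := by
    intro p hp hlt
    rw [Finset.mem_product] at hp
    exact exists_deriv_eq_zero hlt (hg.mono (hV.out (hsV hp.1) (hsV hp.2)))
      ((hgs _ hp.1).trans (hgs _ hp.2).symm)
  choose! z hzI hz using hRolle
  refine ⟨((s ×ˢ s).filter fun p => p.1 < p.2).image z, ?_, ?_, ?_⟩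
  · refine Finset.card_le_of_interleaved fun x hx y hy hxy _ =>
      ⟨z (x, y), Finset.mem_image_of_mem _ (by simp [hx, hy, hxy]),
        hzI (x, y) (Finset.mem_product.2 ⟨hx, hy⟩) hxy⟩
  · simp only [Finset.coe_image, Finset.coe_filter, image_subset_iff]
    rintro p ⟨hp, hlt⟩
    rw [Finset.mem_product] at hp
    exact hV.out (hsV hp.1) (hsV hp.2) (Ioo_subset_Icc_self (hzI p (Finset.mem_product.2 hp) hlt))
  · simp only [Finset.mem_image, Finset.mem_filter]
    rintro _ ⟨p, ⟨hp, hlt⟩, rfl⟩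
    exact hz p hp hlt

theorem exists_iteratedDeriv_eq_zero {V : Set ℝ} (hVo : IsOpen V) (hV : V.OrdConnected)
    {n : ℕ} {g : ℝ → ℝ} (hg : ContDiffOn ℝ n g V) {s : Finset ℝ} (hs : n < s.card)
    (hsV : ↑s ⊆ V) (hgs : ∀ x ∈ s, g x = 0) : ∃ ξ ∈ V, iteratedDeriv n g ξ = 0 := by
  induction n generalizing g s with
  | zero =>
    obtain ⟨x, hx⟩ := Finset.card_pos.1 hs
    exact ⟨x, hsV hx, by simpa using hgs x hx⟩
  | succ n ih =>
    obtain ⟨t, hst, htV, hgt⟩ := exists_finset_deriv_eq_zero hV hg.continuousOn hsV hgs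
    rw [iteratedDeriv_succ']
    exact ih (hg.deriv_of_isOpen hVo (by norm_cast)) (by omega) htV hgt

theorem exists_coeff_eq_iteratedDeriv_div_factorial {V : Set ℝ} (hVo : IsOpen V)
    (hV : V.OrdConnected) {n : ℕ} {f : ℝ → ℝ} (hf : ContDiffOn ℝ n f V) {s : Finset ℝ}
    (hs : n < s.card) (hsV : ↑s ⊆ V) {P : ℝ[X]} (hP : P.natDegree ≤ n)
    (hPf : ∀ x ∈ s, P.eval x = f x) : ∃ ξ ∈ V, P.coeff n = iteratedDeriv n f ξ / n ! := by
  have hPsmooth : ContDiff ℝ n (fun x => P.eval x) := by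
    simpa using P.contDiff_aeval (R := ℝ) (𝕜 := ℝ) n
  obtain ⟨ξ, hξV, hξ⟩ := exists_iteratedDeriv_eq_zero hVo hV (hf.sub hPsmooth.contDiffOn) hs hsV
    fun x hx => sub_eq_zero.2 (hPf x hx).symm
  refine ⟨ξ, hξV, ?_⟩
  rw [iteratedDeriv_fun_sub (hf.contDiffAt (hVo.mem_nhds hξV)) hPsmooth.contDiffAt,
    iteratedDeriv_eval_of_natDegree_le hP, sub_eq_zero] at hξ
  rw [hξ, mul_div_cancel_left₀ _ (Nat.cast_ne_zero.2 n.factorial_ne_zero)]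

noncomputable def taylorPolynomial (f : ℝ → ℝ) (b : ℝ) (n : ℕ) : ℝ[X] :=
  ∑ k ∈ Finset.range (n + 1), C (iteratedDeriv k f b / k !) * (X - C b) ^ k

theorem taylorPolynomial_succ (f : ℝ → ℝ) (b : ℝ) (n : ℕ) :
    taylorPolynomial f b (n + 1) =
      taylorPolynomial f b n + C (iteratedDeriv (n + 1) f b / (n + 1)!) * (X - C b) ^ (n + 1) :=
  Finset.sum_range_succ _ _

section Convergence

variable {ι : Type*} {l : Filter ι}

theorem tendsto_coeff_natDegree_interpolant {U : Set ℝ} (hU : IsOpen U) {b : ℝ} (hb : b ∈ U)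
    {n : ℕ} {f : ℝ → ℝ} (hf : ContDiffOn ℝ n f U) {a : ι → Fin (n + 1) → ℝ}
    (hdist : ∀ s, Function.Injective (a s)) (hconv : ∀ i, Tendsto (fun s => a s i) l (𝓝 b))
    {L : ι → ℝ[X]} (hdeg : ∀ s, (L s).natDegree ≤ n)
    (hinterp : ∀ s i, (L s).eval (a s i) = f (a s i)) :
    Tendsto (fun s => (L s).coeff n) l (𝓝 (iteratedDeriv n f b / n !)) := by
  have hcont : ContinuousAt (fun x => iteratedDeriv n f x / n !) b :=
    (((hf.continuousOn_iteratedDerivWithin le_rfl hU.uniqueDiffOn).congr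
      (iteratedDerivWithin_of_isOpen hU).symm).continuousAt (hU.mem_nhds hb)).div_const _
  suffices h : ∀ V ∈ 𝓝 b, ∀ᶠ s in l, ∃ ξ ∈ V, (L s).coeff n = iteratedDeriv n f ξ / (n ! : ℝ) by
    refine fun W hW => mem_map.2 ?_
    filter_upwards [h _ (hcont hW)] with s ⟨ξ, hξ, hs⟩
    rwa [Set.mem_preimage, hs]
  intro V hV
  obtain ⟨ε, hε, hball⟩ := Metric.mem_nhds_iff.1 (inter_mem hV (hU.mem_nhds hb))
  filter_upwards [eventually_all.2 fun i => hconv i (Metric.ball_mem_nhds b hε)] with s hs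
  obtain ⟨ξ, hξ, hcoeff⟩ := exists_coeff_eq_iteratedDeriv_div_factorial Metric.isOpen_ball
    (convex_ball b ε).ordConnected (hf.mono (hball.trans inter_subset_right))
    (s := Finset.univ.image (a s)) (by simp [Finset.card_image_of_injective _ (hdist s)])
    (by simpa [Set.range_subset_iff] using hs) (hdeg s) (by simpa using hinterp s)
  exact ⟨ξ, (hball hξ).1, hcoeff⟩

theorem tendsto_coeff_interpolant_taylorPolynomial {U : Set ℝ} (hU : IsOpen U) {b : ℝ}
    (hb : b ∈ U) {n : ℕ} {f : ℝ → ℝ} (hf : ContDiffOn ℝ n f U) {a : ι → Fin (n + 1) → ℝ}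
    (hdist : ∀ s, Function.Injective (a s)) (hconv : ∀ i, Tendsto (fun s => a s i) l (𝓝 b))
    {L : ι → ℝ[X]} (hdeg : ∀ s, (L s).natDegree ≤ n)
    (hinterp : ∀ s i, (L s).eval (a s i) = f (a s i)) (k : ℕ) :
    Tendsto (fun s => (L s).coeff k) l (𝓝 ((taylorPolynomial f b n).coeff k)) := by
  induction n generalizing L k with
  | zero =>
    have hc := tendsto_coeff_natDegree_interpolant hU hb hf hdist hconv hdeg hinterp
    rw [taylorPolynomial, Finset.sum_range_one, pow_zero, mul_one, coeff_C]
    split_ifs with hk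
    · simpa [hk] using hc
    · simpa [coeff_eq_zero_of_natDegree_lt ((hdeg _).trans_lt (Nat.pos_of_ne_zero hk))]
        using tendsto_const_nhds
  | succ n ih =>
    -- Newton's formula: `L s = Q s + c s * N s`, where `N s` vanishes at the first `n + 1`
    -- nodes, so that `Q s` interpolates `f` there.
    set N : ι → ℝ[X] := fun s => ∏ i : Fin (n + 1), (X - C (a s i.castSucc))
    set c : ι → ℝ := fun s => (L s).coeff (n + 1)
    set Q : ι → ℝ[X] := fun s => L s - C (c s) * N s
    have hQdeg (s : ι) : (Q s).natDegree ≤ n :=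
      natDegree_sub_C_coeff_mul_le (hdeg s) (monic_prod_X_sub_C _ _) (by simp [N])
    have hQinterp (s : ι) (i : Fin (n + 1)) :
        (Q s).eval (a s i.castSucc) = f (a s i.castSucc) := by
      have hN : (N s).eval (a s i.castSucc) = 0 := by
        simp only [N, eval_prod]
        exact Finset.prod_eq_zero (Finset.mem_univ i) (by simp)
      simp [Q, hN, hinterp]
    have hQ := ih (hf.of_le (by exact_mod_cast n.le_succ))
      (fun s => (hdist s).comp (Fin.castSucc_injective _)) (fun i => hconv i.castSucc)
      hQdeg hQinterp k
    have hc := tendsto_coeff_natDegree_interpolant hU hb hf hdist hconv hdeg hinterp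
    have hN := tendsto_coeff_prod_X_sub_C (c := fun s (i : Fin (n + 1)) => a s i.castSucc)
      Finset.univ (fun i _ => hconv i.castSucc) k
    rw [Finset.card_univ, Fintype.card_fin] at hN
    rw [taylorPolynomial_succ, coeff_add, coeff_C_mul]
    refine (hQ.add (hc.mul hN)).congr fun s => ?_
    simp only [Q, coeff_sub, coeff_C_mul]
    ring

end Convergence

/-- Univariate continuity of Lagrange interpolation: if `d+1` distinct points converge to
`b` and `f` is `C^d` on a neighborhood of `b`, the Lagrange interpolation polynomials
converge coefficientwise to the Taylor polynomial of `f` at `b` of order `d`. -/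
theorem stmt_3 (d : ℕ) (b : ℝ) (U : Set ℝ) (hU : IsOpen U) (hb : b ∈ U)
    (f : ℝ → ℝ) (hf : ContDiffOn ℝ d f U)
    (a : ℕ → Fin (d + 1) → ℝ) (hdist : ∀ s, Function.Injective (a s))
    (hconv : ∀ i, Filter.Tendsto (fun s => a s i) Filter.atTop (nhds b))
    (L : ℕ → Polynomial ℝ) (hdeg : ∀ s, (L s).degree ≤ d)
    (hinterp : ∀ s i, (L s).eval (a s i) = f (a s i)) :
    ∀ k, Filter.Tendsto (fun s => (L s).coeff k) Filter.atTop
      (nhds ((∑ k' ∈ Finset.range (d + 1),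
        Polynomial.C (iteratedDerivWithin k' f U b / (Nat.factorial k' : ℝ)) *
          (Polynomial.X - Polynomial.C b) ^ k').coeff k)) := by
  have htaylor : ∑ k ∈ Finset.range (d + 1),
      C (iteratedDerivWithin k f U b / (k ! : ℝ)) * (X - C b) ^ k = taylorPolynomial f b d :=
    Finset.sum_congr rfl fun k _ => by rw [iteratedDerivWithin_of_isOpen hU hb]
  rw [htaylor]
  exact tendsto_coeff_interpolant_taylorPolynomial hU hb hf hdist hconv
    (fun s => natDegree_le_iff_degree_le.2 (hdeg s)) hinterp
end

section
/- Let ℍ = {ℓ_1,…,ℓ_d}, d ≥ N, be hyperplanes in general position in ℝ^N. The set 𝒱 = {n_K : K ∈ binom(ℍ, N−1)} is an interpolation lattice for the space ℋ^{d−N+1} of homogeneous polynomials of degree d − N + 1 in N variables: the homogeneous polynomials H_K(x) = ∏_{ℓ ∈ ℍ∖K} ℓ̃(x)/ℓ̃(n_K) satisfy H_K(n_K) = 1 and H_K(n_{K'}) = 0 for K' ≠ K, and every function on 𝒱 extends uniquely to an element of ℋ^{d−N+1}. -/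
/-!
For `i ∈ K` the determinant computing `⟨n i, ν K⟩` has a repeated row, while for `i ∉ K` its
rows are the normals indexed by `K ∪ {i}` in some order, so it is nonzero by general position.
Hence the product `H_K` equals `1` at `ν K` and vanishes at `ν K'` for `K' ≠ K`, through a
factor `i ∈ K' \ K`. The `H_K` make evaluation on `𝒱` a surjection from the homogeneous
polynomials of degree `d - m` onto `ℝ^𝒱`; both spaces have dimension `binom(d, m)`, so it is a
bijection.
-/

open MvPolynomial Module Finset

theorem MvPolynomial.finrank_homogeneousSubmodule {σ K : Type*} [Field K] [Fintype σ] (n : ℕ) :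
    finrank K (homogeneousSubmodule σ K n) = (Fintype.card σ).multichoose n := by
  classical
  have e : {d : σ →₀ ℕ | d.degree = n} ≃ Sym σ n :=
    (Equiv.subtypeEquivRight fun _ => Iff.rfl).trans (Sym.equivNatSum σ n).symm
  rw [homogeneousSubmodule_eq_finsupp_supported]
  refine (finrank_eq_nat_card_basis (basisRestrictSupport K _)).trans ?_
  rw [Nat.card_congr e, Nat.card_eq_fintype_card, Sym.card_sym_eq_multichoose]

instance MvPolynomial.finiteDimensional_homogeneousSubmodule {σ K : Type*} [Field K] [Finite σ]
    (n : ℕ) :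
    FiniteDimensional K (homogeneousSubmodule σ K n) :=
  Module.Finite.iff_fg.mpr (homogeneousSubmodule_fg σ K n)

theorem finrank_homogeneousSubmodule_eq_card_finset {F : Type*} [Field F] {m d : ℕ}
    (hmd : m ≤ d) :
    finrank F (homogeneousSubmodule (Fin (m + 1)) F (d - m)) =
      Fintype.card {K : Finset (Fin d) // K.card = m} := by
  rw [finrank_homogeneousSubmodule, Fintype.card_finset_len, Fintype.card_fin, Fintype.card_fin,
    Nat.multichoose_eq, show m + 1 + (d - m) - 1 = d by omega, Nat.choose_symm hmd]

theorem MvPolynomial.existsUnique_interpolant {σ ι K : Type*} [Field K] [Fintype ι]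
    (V : Submodule K (MvPolynomial σ K)) [FiniteDimensional K V]
    (hdim : finrank K V = Fintype.card ι) (x : ι → σ → K)
    (L : ι → MvPolynomial σ K) (hLV : ∀ i, L i ∈ V)
    (hL_self : ∀ i, eval (x i) (L i) = 1) (hL_ne : ∀ i j, i ≠ j → eval (x j) (L i) = 0)
    (f : ι → K) : ∃! P, P ∈ V ∧ ∀ i, eval (x i) P = f i := by
  let E : V →ₗ[K] ι → K := LinearMap.pi fun i => (aeval (x i)).toLinearMap ∘ₗ V.subtype
  have hE : ∀ P : V, ∀ i, E P i = eval (x i) P := fun P i => by simp [E]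
  have hE_surj : Function.Surjective E := by
    intro v
    refine ⟨⟨∑ i, v i • L i, sum_mem fun i _ => V.smul_mem _ (hLV i)⟩, ?_⟩
    ext j
    simp only [hE, map_sum, smul_eval]
    rw [Finset.sum_eq_single j (fun i _ hij => by rw [hL_ne i j hij, mul_zero]) (by simp),
      hL_self, mul_one]
  have hE_inj : Function.Injective E :=
    (LinearMap.injective_iff_surjective_of_finrank_eq_finrank (by simpa using hdim)).mpr hE_surj
  obtain ⟨P, hP⟩ := hE_surj f
  refine ⟨P, ⟨P.2, fun i => by rw [← hP, hE]⟩, fun Q ⟨hQV, hQ⟩ => ?_⟩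
  have hEQ : E ⟨Q, hQV⟩ = E P := by
    ext i
    rw [hP, hE, hQ]
  exact congrArg Subtype.val (hE_inj hEQ)

theorem Matrix.det_submatrix_ne_zero_of_injective {R α : Type*} [CommRing R] [LinearOrder α]
    {k : ℕ} {A : Matrix α (Fin k) R}
    (h : ∀ g : Fin k → α, StrictMono g → (A.submatrix g id).det ≠ 0)
    {g : Fin k → α} (hg : Function.Injective g) : (A.submatrix g id).det ≠ 0 := by
  have hsorted : StrictMono (g ∘ Tuple.sort g) :=
    (Tuple.monotone_sort g).strictMono_of_injective (hg.comp (Tuple.sort g).injective)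
  have hdet := h _ hsorted
  rw [show A.submatrix (g ∘ Tuple.sort g) id = (A.submatrix g id).submatrix (Tuple.sort g) id
    from rfl, Matrix.det_permute] at hdet
  exact right_ne_zero_of_mul hdet

noncomputable def linearForm {N : ℕ} (a : EuclideanSpace ℝ (Fin N)) : MvPolynomial (Fin N) ℝ :=
  ∑ j, C (a j) * X j

theorem isHomogeneous_linearForm {N : ℕ} (a : EuclideanSpace ℝ (Fin N)) :
    (linearForm a).IsHomogeneous 1 :=
  IsHomogeneous.sum _ _ _ fun _ _ => isHomogeneous_C_mul_X _ _

theorem eval_linearForm {N : ℕ} (a x : EuclideanSpace ℝ (Fin N)) :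
    eval (fun j => x j) (linearForm a) = inner ℝ a x := by
  simp [linearForm, PiLp.inner_apply, mul_comm]

section Hyperplanes

variable {m d : ℕ} {n : Fin d → EuclideanSpace ℝ (Fin (m + 1))} {K : Finset (Fin d)}
  {p : EuclideanSpace ℝ (Fin (m + 1))}

theorem inner_eq_zero_of_mem (hK : K.card = m)
    (hp : ∀ w : EuclideanSpace ℝ (Fin (m + 1)), Matrix.det (Matrix.of (Fin.cons (fun j => w j)
      (fun k j => n (K.orderIsoOfFin hK k) j))) = inner ℝ w p)
    {i : Fin d} (hi : i ∈ K) : inner ℝ (n i) p = 0 := by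
  rw [← hp]
  set k := (K.orderIsoOfFin hK).symm ⟨i, hi⟩
  refine Matrix.det_zero_of_row_eq (Fin.succ_ne_zero k).symm (funext fun j => ?_)
  change n i j = n (K.orderIsoOfFin hK k) j
  rw [OrderIso.apply_symm_apply]

theorem inner_ne_zero_of_notMem
    (hgp : ∀ g : Fin (m + 1) → Fin d, StrictMono g →
      Matrix.det (Matrix.of fun i j => n (g i) j) ≠ 0) (hK : K.card = m)
    (hp : ∀ w : EuclideanSpace ℝ (Fin (m + 1)), Matrix.det (Matrix.of (Fin.cons (fun j => w j)
      (fun k j => n (K.orderIsoOfFin hK k) j))) = inner ℝ w p)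
    {i : Fin d} (hi : i ∉ K) : inner ℝ (n i) p ≠ 0 := by
  rw [← hp]
  let g : Fin (m + 1) → Fin d := Fin.cons i fun k => K.orderIsoOfFin hK k
  have hg : Function.Injective g := by
    refine Fin.cons_injective_iff.mpr ⟨?_, ?_⟩
    · simpa [Finset.coe_orderIsoOfFin_apply] using hi
    · exact Subtype.val_injective.comp (K.orderIsoOfFin hK).injective
  convert Matrix.det_submatrix_ne_zero_of_injective (A := Matrix.of fun i j => n i j) hgp hg
    using 2
  ext k j
  cases k using Fin.cases <;> rfl

end Hyperplanes

/-- The paper's `H_K` is `lagrangeProduct n K n_K`. -/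
noncomputable def lagrangeProduct {N d : ℕ} (n : Fin d → EuclideanSpace ℝ (Fin N))
    (K : Finset (Fin d)) (p : EuclideanSpace ℝ (Fin N)) : MvPolynomial (Fin N) ℝ :=
  ∏ i ∈ Kᶜ, C (inner ℝ (n i) p)⁻¹ * linearForm (n i)

theorem eval_lagrangeProduct {N d : ℕ} (n : Fin d → EuclideanSpace ℝ (Fin N))
    (K : Finset (Fin d)) (p x : EuclideanSpace ℝ (Fin N)) :
    eval (fun j => x j) (lagrangeProduct n K p) =
      ∏ i ∈ Kᶜ, inner ℝ (n i) x / inner ℝ (n i) p := by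
  simp [lagrangeProduct, eval_linearForm, div_eq_inv_mul]

theorem isHomogeneous_lagrangeProduct {N d : ℕ} (n : Fin d → EuclideanSpace ℝ (Fin N))
    (K : Finset (Fin d)) (p : EuclideanSpace ℝ (Fin N)) :
    (lagrangeProduct n K p).IsHomogeneous Kᶜ.card := by
  simpa [lagrangeProduct] using IsHomogeneous.prod Kᶜ _ (fun _ => 1)
    fun i _ => (isHomogeneous_linearForm (n i)).C_mul _

theorem stmt_8_general (m d : ℕ) (hd : m + 1 ≤ d)
    (n : Fin d → EuclideanSpace ℝ (Fin (m + 1)))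
    (hgp : ∀ g : Fin (m + 1) → Fin d, StrictMono g →
      Matrix.det (Matrix.of fun i j => n (g i) j) ≠ 0)
    (ν : Finset (Fin d) → EuclideanSpace ℝ (Fin (m + 1)))
    (hν : ∀ (K : Finset (Fin d)) (hK : K.card = m)
        (w : EuclideanSpace ℝ (Fin (m + 1))),
      Matrix.det (Matrix.of (Fin.cons (fun j => w j)
        (fun k j => n (K.orderIsoOfFin hK k) j))) = (inner ℝ w (ν K) : ℝ)) :
    (∀ K : Finset (Fin d), K.card = m →
        (∏ i ∈ Kᶜ, (inner ℝ (n i) (ν K) : ℝ) / (inner ℝ (n i) (ν K) : ℝ)) = 1) ∧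
    (∀ K K' : Finset (Fin d), K.card = m → K'.card = m → K' ≠ K →
        (∏ i ∈ Kᶜ, (inner ℝ (n i) (ν K') : ℝ) / (inner ℝ (n i) (ν K) : ℝ)) = 0) ∧
    ∀ f : EuclideanSpace ℝ (Fin (m + 1)) → ℝ,
      ∃! P : MvPolynomial (Fin (m + 1)) ℝ,
        P ∈ MvPolynomial.homogeneousSubmodule (Fin (m + 1)) ℝ (d - m) ∧
        ∀ K : Finset (Fin d), K.card = m →
          MvPolynomial.eval (fun j => ν K j) P = f (ν K) := by
  have h_self : ∀ K : Finset (Fin d), K.card = m →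
      ∏ i ∈ Kᶜ, inner ℝ (n i) (ν K) / inner ℝ (n i) (ν K) = 1 := fun K hK =>
    prod_eq_one fun i hi => div_self (inner_ne_zero_of_notMem hgp hK (hν K hK) (mem_compl.mp hi))
  have h_ne : ∀ K K' : Finset (Fin d), K.card = m → K'.card = m → K' ≠ K →
      ∏ i ∈ Kᶜ, inner ℝ (n i) (ν K') / inner ℝ (n i) (ν K) = 0 := by
    intro K K' hK hK' hKK'
    obtain ⟨i, hiK', hiK⟩ := not_subset.mp fun hsub =>
      hKK' (eq_of_subset_of_card_le hsub (hK.trans hK'.symm).le)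
    exact prod_eq_zero (mem_compl.mpr hiK)
      (by rw [inner_eq_zero_of_mem hK' (hν K' hK') hiK', zero_div])
  refine ⟨h_self, h_ne, fun f => ?_⟩
  simpa only [Subtype.forall] using existsUnique_interpolant
    (homogeneousSubmodule (Fin (m + 1)) ℝ (d - m))
    (finrank_homogeneousSubmodule_eq_card_finset (by omega)) (fun K j => ν K.1 j)
    (fun K => lagrangeProduct n K.1 (ν K.1))
    (fun K => by simpa [card_compl, K.2] using isHomogeneous_lagrangeProduct n K.1 (ν K.1))
    (fun K => (eval_lagrangeProduct ..).trans (h_self K.1 K.2))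
    (fun K K' hKK' => (eval_lagrangeProduct ..).trans
      (h_ne K.1 K'.1 K.2 K'.2 fun h => hKK' (Subtype.ext h).symm))
    (fun K => f (ν K.1))

/-- The set `𝒱 = {ν K : K ∈ binom(ℍ, N-1)}` is an interpolation lattice for the space of
homogeneous polynomials of degree `d - N + 1` (`N = m+1`): the homogeneous products
`H_K(x) = ∏_{ℓ ∉ K} ℓ̃(x)/ℓ̃(ν K)` satisfy `H_K(ν K) = 1`, `H_K(ν K') = 0` for `K' ≠ K`,
and every function on `𝒱` extends uniquely to a homogeneous polynomial of that degree. -/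
theorem stmt_8 (m d : ℕ) (hd : m + 1 ≤ d)
    (n : Fin d → EuclideanSpace ℝ (Fin (m + 1))) (hn : ∀ i, ‖n i‖ = 1)
    (hgp : ∀ g : Fin (m + 1) → Fin d, StrictMono g →
      Matrix.det (Matrix.of fun i j => n (g i) j) ≠ 0)
    (ν : Finset (Fin d) → EuclideanSpace ℝ (Fin (m + 1)))
    (hν : ∀ (K : Finset (Fin d)) (hK : K.card = m)
        (w : EuclideanSpace ℝ (Fin (m + 1))),
      Matrix.det (Matrix.of (Fin.cons (fun j => w j)
        (fun k j => n (K.orderIsoOfFin hK k) j))) = (inner ℝ w (ν K) : ℝ)) :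
    (∀ K : Finset (Fin d), K.card = m →
        (∏ i ∈ Kᶜ, (inner ℝ (n i) (ν K) : ℝ) / (inner ℝ (n i) (ν K) : ℝ)) = 1) ∧
    (∀ K K' : Finset (Fin d), K.card = m → K'.card = m → K' ≠ K →
        (∏ i ∈ Kᶜ, (inner ℝ (n i) (ν K') : ℝ) / (inner ℝ (n i) (ν K) : ℝ)) = 0) ∧
    ∀ f : EuclideanSpace ℝ (Fin (m + 1)) → ℝ,
      ∃! P : MvPolynomial (Fin (m + 1)) ℝ,
        P ∈ MvPolynomial.homogeneousSubmodule (Fin (m + 1)) ℝ (d - m) ∧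
        ∀ K : Finset (Fin d), K.card = m →
          MvPolynomial.eval (fun j => ν K j) P = f (ν K) :=
  stmt_8_general m d hd n hgp ν hν
end

section
/- Let ℍ = {ℓ_1,…,ℓ_d}, d ≥ N, be hyperplanes in general position in ℝ^N. For every symmetric (d−N+1)-linear form φ on ℝ^N and every v ∈ ℝ^N: φ(v,…,v) = Σ_{K ∈ binom(ℍ, N−1)} [∏_{ℓ ∈ ℍ∖K} ℓ̃(v)/ℓ̃(n_K)] · φ(n_K,…,n_K). -/
/-!
By induction on `k`, the diagonal `x ↦ φ(x, …, x)` of a `k`-linear form lies in the span of the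
products `∏_{i ∈ U} ℓ̃_i` over the `k`-subsets `U`: splitting off one slot gives
`φ(x, …, x) = ∑_j x_j ψ_j(x, …, x)` with `ψ_j` of degree `k - 1`, and `x_j ∏_{i ∈ U} ℓ̃_i` is again
in the span because any `m + 1` of the `ℓ̃_i` with `i ∉ U` span the dual space. The node `n_K` is
orthogonal to the normals indexed by `K` and, by general position, to no other, so `∏_{i ∉ K} ℓ̃_i`
is the only product not vanishing at `n_K`; evaluating at the nodes reads off the coefficients.
-/

open Finset Submodule

variable {R E ι : Type*}

theorem Finset.sum_powersetCard_compl [Fintype ι] [DecidableEq ι] {M : Type*} [AddCommMonoid M]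
    {m k : ℕ} (h : m + k = Fintype.card ι) (g : Finset ι → M) :
    ∑ U ∈ powersetCard k univ, g U = ∑ K ∈ powersetCard m univ, g Kᶜ := by
  refine sum_nbij' compl compl (fun U hU => ?_) (fun K hK => ?_) (fun U _ => compl_compl U)
    (fun K _ => compl_compl K) (fun U _ => by rw [compl_compl])
  · simp only [mem_powersetCard_univ, card_compl] at hU ⊢
    omega
  · simp only [mem_powersetCard_univ, card_compl] at hK ⊢
    omega

def productSpan [Fintype ι] [CommRing R] (ℓ : ι → E → R) (k : ℕ) :
    Submodule R (E → R) :=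
  span R ((fun U => ∏ i ∈ U, ℓ i) '' (powersetCard k (univ : Finset ι) : Set (Finset ι)))

section DiagonalSpan

variable [CommRing R] [AddCommGroup E] [Module R E] [Fintype ι] [DecidableEq ι]
  {ℓ : ι → Module.Dual R E} {m : ℕ}

theorem mul_mem_productSpan_of_span_eq_top
    (hℓ : ∀ T : Finset ι, #T = m + 1 → span R (ℓ '' T) = ⊤) {k : ℕ}
    (hk : m + k + 1 ≤ Fintype.card ι) (g : Module.Dual R E) {f : E → R}
    (hf : f ∈ productSpan (fun i => ⇑(ℓ i)) k) :
    ⇑g * f ∈ productSpan (fun i => ⇑(ℓ i)) (k + 1) := by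
  rw [productSpan] at hf ⊢
  induction hf using Submodule.span_induction with
  | mem f hf =>
    obtain ⟨U, hU, rfl⟩ := hf
    have hUk : #U = k := mem_powersetCard_univ.mp hU
    obtain ⟨T, hTU, hT⟩ : ∃ T ⊆ Uᶜ, #T = m + 1 :=
      exists_subset_card_eq (by rw [card_compl]; omega)
    have hg : g ∈ span R (ℓ '' T) := hℓ T hT ▸ mem_top
    obtain ⟨c, rfl⟩ := (mem_span_image_finset_iff_exists_fun' R).mp hg
    simp only [LinearMap.coe_sum, LinearMap.coe_smul, sum_mul, smul_mul_assoc]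
    refine sum_mem fun t ht => smul_mem _ _ (subset_span ⟨insert t U, ?_, ?_⟩)
    · simp [card_insert_of_notMem (mem_compl.mp (hTU ht)), hUk]
    · exact prod_insert (mem_compl.mp (hTU ht))
  | zero => simp
  | add f₁ f₂ _ _ h₁ h₂ => simpa [mul_add] using add_mem h₁ h₂
  | smul a f _ h => simpa [mul_smul_comm] using smul_mem _ a h

theorem diag_mem_productSpan_of_span_eq_top [Module.Free R E] [Module.Finite R E]
    (hℓ : ∀ T : Finset ι, #T = m + 1 → span R (ℓ '' T) = ⊤) {k : ℕ}
    (hk : m + k ≤ Fintype.card ι) (φ : MultilinearMap R (fun _ : Fin k => E) R) :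
    (fun x => φ fun _ => x) ∈ productSpan (fun i => ⇑(ℓ i)) k := by
  induction k with
  | zero =>
    have hφ : (fun x => φ fun _ => x) = φ (fun _ => 0) • ∏ i ∈ ∅, ⇑(ℓ i) := by
      ext x
      simp [Subsingleton.elim (fun _ => x) (fun _ => 0)]
    rw [hφ]
    exact smul_mem _ _ (subset_span ⟨∅, by simp, rfl⟩)
  | succ k ih =>
    let b := Module.Free.chooseBasis R E
    have hφ : (fun x => φ fun _ => x) =
        ∑ j, ⇑(b.coord j) * fun x => φ.curryLeft (b j) fun _ => x := by
      ext x
      calc φ (fun _ => x) = φ.curryLeft x fun _ => x := congrArg φ (Fin.cons_self_tail _).symm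
        _ = φ.curryLeft (∑ j, b.repr x j • b j) fun _ => x := by rw [b.sum_repr]
        _ = _ := by
          simp only [map_sum, map_smul, _root_.sum_apply, smul_apply, Finset.sum_apply,
            Pi.mul_apply, smul_eq_mul, Module.Basis.coord_apply]
    rw [hφ]
    exact sum_mem fun j _ =>
      mul_mem_productSpan_of_span_eq_top hℓ (by omega) _ (ih (by omega) _)

end DiagonalSpan

theorem eq_sum_prod_div_mul_of_mem_productSpan [Fintype ι] [DecidableEq ι] {F : Type*} [Field F]
    {ℓ : ι → E → F} {k : ℕ} {μ : Finset ι → E}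
    (hμ : ∀ U ∈ powersetCard k univ, ∀ i, ℓ i (μ U) = 0 ↔ i ∉ U)
    {f : E → F} (hf : f ∈ productSpan ℓ k) (v : E) :
    f v = ∑ U ∈ powersetCard k univ, (∏ i ∈ U, ℓ i v / ℓ i (μ U)) * f (μ U) := by
  obtain ⟨c, hc⟩ := (mem_span_image_finset_iff_exists_fun' F).mp hf
  have hf_apply : ∀ x, f x = ∑ U ∈ powersetCard k univ, c U * ∏ i ∈ U, ℓ i x := fun x => by
    simp [← hc, Finset.sum_apply, prod_apply]
  have hf_node : ∀ U ∈ powersetCard k univ, f (μ U) = c U * ∏ i ∈ U, ℓ i (μ U) := by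
    intro U hU
    rw [hf_apply, sum_eq_single_of_mem U hU]
    intro U' hU' hne
    have hcard : #U' = #U := by
      rw [mem_powersetCard_univ.mp hU, mem_powersetCard_univ.mp hU']
    obtain ⟨i, hiU', hiU⟩ := not_subset.mp fun h => hne (eq_of_subset_of_card_le h hcard.ge)
    rw [prod_eq_zero hiU' ((hμ U hU i).mpr hiU), mul_zero]
  have hprod_ne : ∀ U ∈ powersetCard k univ, ∏ i ∈ U, ℓ i (μ U) ≠ 0 := fun U hU =>
    prod_ne_zero_iff.mpr fun i hi => (hμ U hU i).not.mpr (not_not.mpr hi)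
  rw [hf_apply]
  refine sum_congr rfl fun U hU => ?_
  rw [hf_node U hU, prod_div_distrib]
  field_simp [hprod_ne U hU]

theorem EuclideanSpace.linearIndependent_iff_det_ne_zero {𝕜 : Type*} [RCLike 𝕜] [Fintype ι]
    [DecidableEq ι] (v : ι → EuclideanSpace 𝕜 ι) :
    LinearIndependent 𝕜 v ↔ (Matrix.of fun i j => v i j).det ≠ 0 := by
  rw [← isUnit_iff_ne_zero, ← Matrix.isUnit_iff_isUnit_det,
    ← Matrix.linearIndependent_rows_iff_isUnit]
  exact (LinearMap.linearIndependent_iff (WithLp.linearEquiv 2 𝕜 (ι → 𝕜)).toLinearMap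
    (LinearEquiv.ker _)).symm

theorem linearIndependent_comp_iff_injective [DecidableEq ι] [Ring R] [Nontrivial R]
    [AddCommGroup E] [Module R E] {n : ι → E} {N : ℕ}
    (hli : ∀ T : Finset ι, #T = N → LinearIndepOn R n T) (g : Fin N → ι) :
    LinearIndependent R (n ∘ g) ↔ Function.Injective g := by
  refine ⟨fun h => h.injective.of_comp, fun hg => ?_⟩
  rw [← linearIndepOn_range_iff hg, ← Set.image_univ, ← coe_univ, ← coe_image]
  exact hli _ (by rw [card_image_of_injective _ hg, card_univ, Fintype.card_fin])

theorem span_innerₗ_image_eq_top [NormedAddCommGroup E] [InnerProductSpace ℝ E]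
    [FiniteDimensional ℝ E] {n : ι → E} {T : Finset ι} (hT : LinearIndepOn ℝ n T)
    (hcard : #T = Module.finrank ℝ E) :
    span ℝ ((fun i => innerₗ E (n i)) '' T) = ⊤ := by
  have hker : LinearMap.ker (innerₗ E) = ⊥ :=
    LinearMap.ker_eq_bot'.mpr fun x hx => inner_self_eq_zero.mp (LinearMap.congr_fun hx x)
  rw [Set.image_eq_range]
  exact (hT.map' (innerₗ E) hker).span_eq_top_of_card_eq_finrank'
    (by simp [hcard, Subspace.dual_finrank_eq])

section GeneralPosition

variable [LinearOrder ι]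

theorem linearIndepOn_of_det_ne_zero {𝕜 : Type*} [RCLike 𝕜] {N : ℕ}
    {n : ι → EuclideanSpace 𝕜 (Fin N)}
    (hgp : ∀ g : Fin N → ι, StrictMono g → (Matrix.of fun i j => n (g i) j).det ≠ 0)
    {T : Finset ι} (hT : #T = N) : LinearIndepOn 𝕜 n T := by
  rw [← range_orderEmbOfFin T hT, linearIndepOn_range_iff (T.orderEmbOfFin hT).injective,
    EuclideanSpace.linearIndependent_iff_det_ne_zero]
  exact hgp _ (T.orderEmbOfFin hT).strictMono

theorem inner_eq_zero_iff_mem_of_det_eq_inner {m : ℕ} {n : ι → EuclideanSpace ℝ (Fin (m + 1))}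
    (hli : ∀ T : Finset ι, #T = m + 1 → LinearIndepOn ℝ n T) {K : Finset ι} (hK : #K = m)
    {ν : EuclideanSpace ℝ (Fin (m + 1))}
    (hν : ∀ w : EuclideanSpace ℝ (Fin (m + 1)),
      (Matrix.of (Fin.cons (fun j => w j) fun k j => n (K.orderIsoOfFin hK k) j)).det =
        inner ℝ w ν)
    (i : ι) : inner ℝ (n i) ν = 0 ↔ i ∈ K := by
  let g : Fin (m + 1) → ι := Fin.cons i fun k => K.orderEmbOfFin hK k
  have hrows : Matrix.of (Fin.cons (fun j => n i j) fun k j => n (K.orderIsoOfFin hK k) j) =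
      Matrix.of fun t j => n (g t) j := by
    ext t j
    cases t using Fin.cases <;> simp [g]
  rw [← hν, hrows, ← not_ne_iff]
  refine (not_congr ((EuclideanSpace.linearIndependent_iff_det_ne_zero (n ∘ g)).symm.trans
    (linearIndependent_comp_iff_injective hli g))).trans ?_
  simp [g, Fin.cons_injective_iff, range_orderEmbOfFin, (K.orderEmbOfFin hK).injective]

end GeneralPosition

theorem stmt_9_general (m d : ℕ) (hd : m + 1 ≤ d)
    (n : Fin d → EuclideanSpace ℝ (Fin (m + 1)))
    (hgp : ∀ g : Fin (m + 1) → Fin d, StrictMono g →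
      Matrix.det (Matrix.of fun i j => n (g i) j) ≠ 0)
    (ν : Finset (Fin d) → EuclideanSpace ℝ (Fin (m + 1)))
    (hν : ∀ (K : Finset (Fin d)) (hK : K.card = m)
        (w : EuclideanSpace ℝ (Fin (m + 1))),
      Matrix.det (Matrix.of (Fin.cons (fun j => w j)
        (fun k j => n (K.orderIsoOfFin hK k) j))) = (inner ℝ w (ν K) : ℝ))
    (φ : MultilinearMap ℝ (fun _ : Fin (d - m) => EuclideanSpace ℝ (Fin (m + 1))) ℝ)
    (v : EuclideanSpace ℝ (Fin (m + 1))) :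
    φ (fun _ => v) =
      ∑ K ∈ Finset.powersetCard m (Finset.univ : Finset (Fin d)),
        (∏ i ∈ Kᶜ, (inner ℝ (n i) v : ℝ) / (inner ℝ (n i) (ν K) : ℝ)) *
          φ (fun _ => ν K) := by
  have hli (T : Finset (Fin d)) (hT : #T = m + 1) : LinearIndepOn ℝ n T :=
    linearIndepOn_of_det_ne_zero hgp hT
  have hdiag : (fun x => φ fun _ => x) ∈ productSpan (fun i => ⇑(innerₗ _ (n i))) (d - m) :=
    diag_mem_productSpan_of_span_eq_top
      (fun T hT => span_innerₗ_image_eq_top (hli T hT) (by simp [hT])) (by simp; omega) φ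
  have hnode : ∀ U ∈ powersetCard (d - m) univ, ∀ i,
      innerₗ _ (n i) (ν Uᶜ) = 0 ↔ i ∉ U := by
    intro U hU i
    have hUc : #Uᶜ = m := by
      rw [card_compl, mem_powersetCard_univ.mp hU, Fintype.card_fin]
      omega
    rw [innerₗ_apply_apply, inner_eq_zero_iff_mem_of_det_eq_inner hli hUc (hν Uᶜ hUc), mem_compl]
  rw [eq_sum_prod_div_mul_of_mem_productSpan hnode hdiag v,
    sum_powersetCard_compl (m := m) (by simp; omega)]
  simp

/-- Representation of symmetric `(d-N+1)`-linear forms (`N = m+1`): for hyperplanes in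
general position, `φ(v, …, v) = ∑_K (∏_{ℓ ∉ K} ℓ̃(v)/ℓ̃(ν K)) · φ(ν K, …, ν K)`. -/
theorem stmt_9 (m d : ℕ) (hd : m + 1 ≤ d)
    (n : Fin d → EuclideanSpace ℝ (Fin (m + 1))) (hn : ∀ i, ‖n i‖ = 1)
    (hgp : ∀ g : Fin (m + 1) → Fin d, StrictMono g →
      Matrix.det (Matrix.of fun i j => n (g i) j) ≠ 0)
    (ν : Finset (Fin d) → EuclideanSpace ℝ (Fin (m + 1)))
    (hν : ∀ (K : Finset (Fin d)) (hK : K.card = m)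
        (w : EuclideanSpace ℝ (Fin (m + 1))),
      Matrix.det (Matrix.of (Fin.cons (fun j => w j)
        (fun k j => n (K.orderIsoOfFin hK k) j))) = (inner ℝ w (ν K) : ℝ))
    (φ : MultilinearMap ℝ (fun _ : Fin (d - m) => EuclideanSpace ℝ (Fin (m + 1))) ℝ)
    (hφ : ∀ (σ : Equiv.Perm (Fin (d - m))) (z : Fin (d - m) → EuclideanSpace ℝ (Fin (m + 1))),
      φ (z ∘ σ) = φ z)
    (v : EuclideanSpace ℝ (Fin (m + 1))) :
    φ (fun _ => v) =
      ∑ K ∈ Finset.powersetCard m (Finset.univ : Finset (Fin d)),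
        (∏ i ∈ Kᶜ, (inner ℝ (n i) v : ℝ) / (inner ℝ (n i) (ν K) : ℝ)) *
          φ (fun _ => ν K) :=
  stmt_9_general m d hd n hgp ν hν φ v
end

section
/- (Base case of the representation formula) Let H = {ℓ_1,…,ℓ_N} be N hyperplanes in ℝ^N in general position and φ a linear form on ℝ^N. Then for all x: φ(x) = φ(θ_H) + Σ_{i=1}^N (ℓ_i(x)/ℓ̃_i(n_{H∖ℓ_i})) · φ(n_{H∖ℓ_i}). -/
/-!
The vector `ν i` is orthogonal to every `n j` with `j ≠ i`, since the determinant defining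
`⟪n j, ν i⟫` then has a repeated row, while `⟪n i, ν i⟫ = ± det (n) ≠ 0`. Hence `(ν i)` is, up to
scaling, the dual basis of the basis `(n i)`, so `x - θ = ∑ i, (⟪n i, x - θ⟫ / ⟪n i, ν i⟫) • ν i`,
and it remains to apply `φ` and use `⟪n i, θ⟫ = c i`.
-/

open Matrix

namespace Matrix

variable {R : Type*} [CommRing R] {m : ℕ}

theorem det_of_cons_succAbove_of_ne (A : Matrix (Fin (m + 1)) (Fin (m + 1)) R)
    {i j : Fin (m + 1)} (hji : j ≠ i) :
    det (of (Fin.cons (A j) fun k => A (i.succAbove k) : Fin (m + 1) → Fin (m + 1) → R)) = 0 := by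
  obtain ⟨k, rfl⟩ := Fin.exists_succAbove_eq hji
  exact det_zero_of_row_eq (Fin.succ_ne_zero k).symm rfl

theorem det_of_cons_succAbove_self (A : Matrix (Fin (m + 1)) (Fin (m + 1)) R)
    (i : Fin (m + 1)) :
    det (of (Fin.cons (A i) fun k => A (i.succAbove k) : Fin (m + 1) → Fin (m + 1) → R)) =
      (-1) ^ (i : ℕ) * det A := by
  have hperm : of (Fin.cons (A i) fun k => A (i.succAbove k) : Fin (m + 1) → Fin (m + 1) → R) =
      A.submatrix i.cycleRange.symm id :=
    Fin.cons_removeNth_eq_comp_cycleRange_symm A i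
  rw [hperm, det_permute, Equiv.Perm.sign_symm, Fin.sign_cycleRange]
  push_cast
  rfl

end Matrix

theorem EuclideanSpace.linearIndependent_of_det_ne_zero {𝕜 ι : Type*} [RCLike 𝕜] [Fintype ι]
    [DecidableEq ι] {v : ι → EuclideanSpace 𝕜 ι} (h : det (of fun i j => v i j) ≠ 0) :
    LinearIndependent 𝕜 v :=
  .of_comp (WithLp.linearEquiv 2 𝕜 (ι → 𝕜)).toLinearMap (linearIndependent_rows_of_det_ne_zero h)

theorem Module.Basis.eq_sum_inner_div_inner_smul {𝕜 ι E : Type*} [RCLike 𝕜] [Fintype ι]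
    [NormedAddCommGroup E] [InnerProductSpace 𝕜 E] (b : Basis ι 𝕜 E) {ν : ι → E}
    (horth : ∀ i j, j ≠ i → inner 𝕜 (b j) (ν i) = 0) (hdiag : ∀ i, inner 𝕜 (b i) (ν i) ≠ 0)
    (v : E) : v = ∑ i, (inner 𝕜 (b i) v / inner 𝕜 (b i) (ν i)) • ν i := by
  refine InnerProductSpace.ext_inner_left_basis b fun j => ?_
  rw [inner_sum, Finset.sum_eq_single j (fun i _ hij => by rw [inner_smul_right, horth i j hij.symm,
    mul_zero]) (by simp), inner_smul_right, div_mul_cancel₀ _ (hdiag j)]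

theorem stmt_12_general (m : ℕ) (n : Fin (m + 1) → EuclideanSpace ℝ (Fin (m + 1)))
    (c : Fin (m + 1) → ℝ)
    (hgp : Matrix.det (Matrix.of fun i j => n i j) ≠ 0)
    (θ : EuclideanSpace ℝ (Fin (m + 1))) (hθ : ∀ i, (inner ℝ (n i) θ : ℝ) = c i)
    (ν : Fin (m + 1) → EuclideanSpace ℝ (Fin (m + 1)))
    (hν : ∀ i (w : EuclideanSpace ℝ (Fin (m + 1))),
      Matrix.det (Matrix.of (Fin.cons (fun j => w j) (fun k j => n (i.succAbove k) j))) =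
        (inner ℝ w (ν i) : ℝ))
    (φ : EuclideanSpace ℝ (Fin (m + 1)) →ₗ[ℝ] ℝ) (x : EuclideanSpace ℝ (Fin (m + 1))) :
    φ x = φ θ + ∑ i, (((inner ℝ (n i) x : ℝ) - c i) / (inner ℝ (n i) (ν i) : ℝ)) * φ (ν i) := by
  let b := basisOfLinearIndependentOfCardEqFinrank
    (EuclideanSpace.linearIndependent_of_det_ne_zero hgp) (by simp)
  have horth : ∀ i j, j ≠ i → inner ℝ (b j) (ν i) = 0 := fun i j hji => by
    rw [coe_basisOfLinearIndependentOfCardEqFinrank, ← hν]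
    exact det_of_cons_succAbove_of_ne (of fun i j => n i j) hji
  have hdiag : ∀ i, inner ℝ (b i) (ν i) ≠ 0 := fun i => by
    rw [coe_basisOfLinearIndependentOfCardEqFinrank, ← hν]
    exact (det_of_cons_succAbove_self (of fun i j => n i j) i).trans_ne
      (mul_ne_zero (pow_ne_zero _ (neg_ne_zero.mpr one_ne_zero)) hgp)
  calc φ x = φ θ + φ (x - θ) := by simp
    _ = _ := by
      rw [b.eq_sum_inner_div_inner_smul horth hdiag (x - θ), map_sum]
      simp [b, inner_sub_right, hθ]

/-- Base case of the representation formula: for `N = m+1` hyperplanes in general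
position with common point `θ` and a linear form `φ`,
`φ(x) = φ(θ) + ∑_i (ℓ_i(x)/ℓ̃_i(ν i)) · φ(ν i)` where `ν i = n_{H∖ℓ_i}`. -/
theorem stmt_12 (m : ℕ) (n : Fin (m + 1) → EuclideanSpace ℝ (Fin (m + 1)))
    (c : Fin (m + 1) → ℝ) (hn : ∀ i, ‖n i‖ = 1)
    (hgp : Matrix.det (Matrix.of fun i j => n i j) ≠ 0)
    (θ : EuclideanSpace ℝ (Fin (m + 1))) (hθ : ∀ i, (inner ℝ (n i) θ : ℝ) = c i)
    (ν : Fin (m + 1) → EuclideanSpace ℝ (Fin (m + 1)))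
    (hν : ∀ i (w : EuclideanSpace ℝ (Fin (m + 1))),
      Matrix.det (Matrix.of (Fin.cons (fun j => w j) (fun k j => n (i.succAbove k) j))) =
        (inner ℝ w (ν i) : ℝ))
    (φ : EuclideanSpace ℝ (Fin (m + 1)) →ₗ[ℝ] ℝ) (x : EuclideanSpace ℝ (Fin (m + 1))) :
    φ x = φ θ + ∑ i, (((inner ℝ (n i) x : ℝ) - c i) / (inner ℝ (n i) (ν i) : ℝ)) * φ (ν i) :=
  stmt_12_general m n c hgp θ hθ ν hν φ x
end

section
/- (Counterexample when (C2) fails) For ε ≥ 0 and t = 1/s, consider the degree-1 interpolation lattice Θ^{(s)} = {(0,0), (t, t^{2+ε}), (2t, 0)} ⊂ ℝ². Then the Lagrange interpolation polynomial of the monomial x₁² of degree ≤ 1 at Θ^{(s)} equals 2t·x₁ − x₂/t^ε, which does not converge to the Taylor polynomial T_0^1(x₁²) = 0 as s → ∞. -/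
/-!
An affine function of two variables is determined by its values at three non-collinear points,
so it suffices to check that `2t·x₁ - x₂/t^ε` is affine and takes the values of `x₁²` at the
three nodes, using `t^{2+ε} = t² · t^ε`. At `(0, 1)` this interpolant equals `-s^ε ≤ -1`,
so it stays away from the Taylor value `0`.
-/

open Filter

def IsAffineFun (g : ℝ × ℝ → ℝ) : Prop :=
  ∃ a b c : ℝ, ∀ p : ℝ × ℝ, g p = a + b * p.1 + c * p.2

theorem IsAffineFun.sub {f g : ℝ × ℝ → ℝ} (hf : IsAffineFun f) (hg : IsAffineFun g) :
    IsAffineFun (f - g) := by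
  obtain ⟨a, b, c, hf⟩ := hf
  obtain ⟨a', b', c', hg⟩ := hg
  exact ⟨a - a', b - b', c - c', fun p => by simp only [Pi.sub_apply, hf, hg]; ring⟩

theorem IsAffineFun.eq_zero_of_eq_zero_of_det_ne_zero {g : ℝ × ℝ → ℝ} (hg : IsAffineFun g)
    {p q r : ℝ × ℝ} (hdet : (q.1 - p.1) * (r.2 - p.2) - (q.2 - p.2) * (r.1 - p.1) ≠ 0)
    (hp : g p = 0) (hq : g q = 0) (hr : g r = 0) : g = 0 := by
  obtain ⟨a, b, c, hg⟩ := hg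
  rw [hg] at hp hq hr
  -- Cramer's rule for the differences `g q - g p` and `g r - g p`
  have hb : b = 0 := by
    refine (mul_eq_zero.mp ?_).resolve_right hdet
    linear_combination (r.2 - p.2) * (hq - hp) - (q.2 - p.2) * (hr - hp)
  have hc : c = 0 := by
    refine (mul_eq_zero.mp ?_).resolve_right hdet
    linear_combination (q.1 - p.1) * (hr - hp) - (r.1 - p.1) * (hq - hp)
  have ha : a = 0 := by simpa [hb, hc] using hp
  funext x
  simp [hg, ha, hb, hc]

theorem IsAffineFun.eq_of_eq_of_det_ne_zero {f g : ℝ × ℝ → ℝ} (hf : IsAffineFun f)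
    (hg : IsAffineFun g) {p q r : ℝ × ℝ}
    (hdet : (q.1 - p.1) * (r.2 - p.2) - (q.2 - p.2) * (r.1 - p.1) ≠ 0)
    (hp : f p = g p) (hq : f q = g q) (hr : f r = g r) : f = g :=
  sub_eq_zero.mp <| (hf.sub hg).eq_zero_of_eq_zero_of_det_ne_zero hdet
    (sub_eq_zero.mpr hp) (sub_eq_zero.mpr hq) (sub_eq_zero.mpr hr)

theorem one_le_one_div_rpow {t ε : ℝ} (ht₀ : 0 < t) (ht₁ : t ≤ 1) (hε : 0 ≤ ε) :
    1 ≤ 1 / t ^ ε := by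
  rw [one_div, ← Real.inv_rpow ht₀.le]
  exact Real.one_le_rpow (one_le_inv_iff₀.mpr ⟨ht₀, ht₁⟩) hε

/-- Counterexample when (C2) fails: for `ε ≥ 0` and `t = 1/s`, the affine Lagrange
interpolant of `x₁²` at `{(0,0), (t, t^{2+ε}), (2t, 0)}` is `2t·x₁ - x₂/t^ε`, which does
not converge to the Taylor polynomial `T_0^1(x₁²) = 0` as `s → ∞` (e.g. its value at
`(0, 1)` does not tend to `0`). -/
theorem stmt_18 (ε : ℝ) (hε : 0 ≤ ε) :
    (∀ s : ℕ, 1 ≤ s → ∀ g : ℝ × ℝ → ℝ,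
      (∃ a b c : ℝ, ∀ p : ℝ × ℝ, g p = a + b * p.1 + c * p.2) →
      g (0, 0) = 0 →
      g ((1 : ℝ) / s, ((1 : ℝ) / s) ^ ((2 : ℝ) + ε)) = ((1 : ℝ) / s) ^ (2 : ℕ) →
      g (2 * ((1 : ℝ) / s), 0) = (2 * ((1 : ℝ) / s)) ^ (2 : ℕ) →
      ∀ p : ℝ × ℝ, g p = 2 * ((1 : ℝ) / s) * p.1 - p.2 / ((1 : ℝ) / s) ^ ε) ∧
    ¬ Filter.Tendsto
      (fun s : ℕ => 2 * ((1 : ℝ) / s) * (0 : ℝ) - (1 : ℝ) / ((1 : ℝ) / s) ^ ε)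
      Filter.atTop (nhds 0) := by
  have ht : ∀ s : ℕ, 1 ≤ s → 0 < (1 : ℝ) / s ∧ (1 : ℝ) / s ≤ 1 := fun s hs =>
    ⟨by positivity, div_le_one_of_le₀ (by exact_mod_cast hs) (Nat.cast_nonneg s)⟩
  constructor
  · intro s hs g hg h₀ h₁ h₂
    set t : ℝ := 1 / s
    have ht₀ : 0 < t := (ht s hs).1
    have hsplit : t ^ ((2 : ℝ) + ε) = t ^ (2 : ℕ) * t ^ ε := by
      rw [Real.rpow_add ht₀, Real.rpow_two]
    have hinterp : IsAffineFun (fun p => 2 * t * p.1 - p.2 / t ^ ε) :=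
      ⟨0, 2 * t, -(1 / t ^ ε), fun p => by ring⟩
    refine congrFun (IsAffineFun.eq_of_eq_of_det_ne_zero hg hinterp (p := (0, 0))
      (q := (t, t ^ ((2 : ℝ) + ε))) (r := (2 * t, 0)) ?_ ?_ ?_ ?_)
    · simp only [sub_zero, mul_zero, zero_sub, neg_ne_zero]
      exact mul_ne_zero (Real.rpow_pos_of_pos ht₀ _).ne' (by positivity)
    · simpa using h₀
    · rw [h₁, hsplit]; field_simp; ring
    · rw [h₂]; ring
  · intro h
    have hle : ∀ᶠ s : ℕ in atTop,
        2 * ((1 : ℝ) / s) * 0 - 1 / ((1 : ℝ) / s) ^ ε ≤ -1 := by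
      filter_upwards [eventually_ge_atTop 1] with s hs
      linarith [one_le_one_div_rpow (ht s hs).1 (ht s hs).2 hε]
    linarith [le_of_tendsto h hle]
end
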